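/- Let π be any smooth bivector field on a manifold M whose characteristic distribution is integrable and has rank at most 2 at each point. Then π is a Poisson bivector (the Jacobi identity holds automatically). -/

import Mathlib

/-- Partial derivative in the `i`-th coordinate direction on `ℝⁿ`. -/
noncomputable def pd {n : ℕ} (i : Fin n) (g : (Fin n → ℝ) → ℝ) (p : Fin n → ℝ) : ℝ :=
  fderiv ℝ g p (Pi.single i 1)

/-- The Lie bracket of two vector fields on `ℝⁿ`:
`[X,Y](p) = DY(p)(X(p)) − DX(p)(Y(p))`. -/
noncomputable def lieB {n : ℕ} (X Y : (Fin n → ℝ) → Fin n → ℝ) (p : Fin n → ℝ) :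
    Fin n → ℝ :=
  fderiv ℝ Y p (X p) - fderiv ℝ X p (Y p)

/-- The bracket `{g,h} = π(dg,dh)` induced by a bivector field `π`, given by its
antisymmetric matrix of components. -/
noncomputable def bracket {n : ℕ} (π : (Fin n → ℝ) → Matrix (Fin n) (Fin n) ℝ)
    (g h : (Fin n → ℝ) → ℝ) (p : Fin n → ℝ) : ℝ :=
  ∑ i, ∑ j, π p i j * pd i g p * pd j h p

section PD
variable {n : ℕ}

lemma pd_smooth {g : (Fin n → ℝ) → ℝ} (hg : ContDiff ℝ (⊤ : ℕ∞) g) (i : Fin n) :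
    ContDiff ℝ (⊤ : ℕ∞) (pd i g) := by
  have h1 : ContDiff ℝ (⊤ : ℕ∞) (fderiv ℝ g) := hg.fderiv_right (by simp)
  exact h1.clm_apply contDiff_const

lemma pd_diffAt {g : (Fin n → ℝ) → ℝ} (hg : ContDiff ℝ (⊤ : ℕ∞) g) (i : Fin n) (p : Fin n → ℝ) :
    DifferentiableAt ℝ (pd i g) p :=
  ((pd_smooth hg i).differentiable (by simp)).differentiableAt

lemma pd_sum {ι : Type*} (s : Finset ι) (f : ι → (Fin n → ℝ) → ℝ) (l : Fin n) (p : Fin n → ℝ)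
    (hf : ∀ i ∈ s, DifferentiableAt ℝ (f i) p) :
    pd l (fun q => ∑ i ∈ s, f i q) p = ∑ i ∈ s, pd l (f i) p := by
  unfold pd
  rw [fderiv_fun_sum hf, ContinuousLinearMap.sum_apply]

lemma pd_mul (f g : (Fin n → ℝ) → ℝ) (l : Fin n) (p : Fin n → ℝ)
    (hf : DifferentiableAt ℝ f p) (hg : DifferentiableAt ℝ g p) :
    pd l (fun q => f q * g q) p = pd l f p * g p + f p * pd l g p := by
  unfold pd
  rw [fderiv_fun_mul hf hg]
  simp only [ContinuousLinearMap.add_apply, ContinuousLinearMap.smul_apply, smul_eq_mul]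
  ring

lemma pd_mul3 (f g h : (Fin n → ℝ) → ℝ) (l : Fin n) (p : Fin n → ℝ)
    (hf : DifferentiableAt ℝ f p) (hg : DifferentiableAt ℝ g p)
    (hh : DifferentiableAt ℝ h p) :
    pd l (fun q => f q * g q * h q) p
      = pd l f p * g p * h p + f p * pd l g p * h p + f p * g p * pd l h p := by
  rw [pd_mul (fun q => f q * g q) h l p (hf.mul hg) hh, pd_mul f g l p hf hg]
  ring

lemma pd_apply {f : (Fin n → ℝ) → ℝ} (p : Fin n → ℝ) (hf : DifferentiableAt ℝ f p)
    (w : Fin n → ℝ) : fderiv ℝ f p w = ∑ l, w l * pd l f p := by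
  conv_lhs => rw [show w = ∑ l, Pi.single l (w l) from (Finset.univ_sum_single w).symm]
  rw [map_sum]
  refine Finset.sum_congr rfl fun l _ => ?_
  have : Pi.single l (w l) = (w l) • (Pi.single l (1:ℝ) : Fin n → ℝ) := by
    funext j
    simp [Pi.single_apply]
  rw [this, map_smul]
  simp [pd]

lemma pd_pd_symm {g : (Fin n → ℝ) → ℝ} (hg : ContDiff ℝ (⊤ : ℕ∞) g) (l a : Fin n) (p : Fin n → ℝ) :
    pd l (pd a g) p = pd a (pd l g) p := by
  have hdg : ContDiff ℝ (⊤ : ℕ∞) (fderiv ℝ g) := hg.fderiv_right (by simp)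
  have hdgd : DifferentiableAt ℝ (fderiv ℝ g) p :=
    ((hdg.differentiable (by simp))).differentiableAt
  have key : ∀ v w : Fin n → ℝ, fderiv ℝ (fderiv ℝ g) p v w = fderiv ℝ (fderiv ℝ g) p w v := by
    intro v w
    refine second_derivative_symmetric (f := g) (x := p) (f' := fderiv ℝ g) (fun y => ?_) ?_ v w
    · exact ((hg.differentiable (by simp)) y).hasFDerivAt
    · exact hdgd.hasFDerivAt
  have expand : ∀ l a : Fin n, pd l (pd a g) p
      = fderiv ℝ (fderiv ℝ g) p (Pi.single l 1) (Pi.single a 1) := by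
    intro l a
    unfold pd
    rw [fderiv_clm_apply (c := fderiv ℝ g) (u := fun _ => Pi.single a (1:ℝ)) hdgd
      (differentiableAt_const _)]
    simp
  rw [expand, expand, key]

section Alg
variable {n : ℕ}

abbrev Quad (n : ℕ) := Fin n × Fin n × Fin n × Fin n

lemma sum4_eq (f : Fin n → Fin n → Fin n → Fin n → ℝ) :
    (∑ i, ∑ l, ∑ a, ∑ b, f i l a b)
      = ∑ x : Quad n, f x.1 x.2.1 x.2.2.1 x.2.2.2 := by
  simp [Fintype.sum_prod_type]

/-- relabel `(i,l,a,b) → (i,l,b,a)` -/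
lemma sum4_swapAB (f : Fin n → Fin n → Fin n → Fin n → ℝ) :
    (∑ i, ∑ l, ∑ a, ∑ b, f i l a b) = ∑ i, ∑ l, ∑ a, ∑ b, f i l b a := by
  refine (sum4_eq f).trans (Eq.trans ?_ (sum4_eq (fun i l a b => f i l b a)).symm)
  exact Fintype.sum_equiv ⟨fun x => (x.1, x.2.1, x.2.2.2, x.2.2.1),
    fun x => (x.1, x.2.1, x.2.2.2, x.2.2.1),
    fun ⟨i, l, a, b⟩ => rfl, fun ⟨i, l, a, b⟩ => rfl⟩ _ _ (fun ⟨i, l, a, b⟩ => rfl)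

/-- relabel to `f a b l i` -/
lemma sum4_pair (f : Fin n → Fin n → Fin n → Fin n → ℝ) :
    (∑ i, ∑ l, ∑ a, ∑ b, f i l a b) = ∑ i, ∑ l, ∑ a, ∑ b, f a b l i := by
  refine (sum4_eq f).trans (Eq.trans ?_ (sum4_eq (fun i l a b => f a b l i)).symm)
  exact Fintype.sum_equiv ⟨fun x => (x.2.2.2, x.2.2.1, x.1, x.2.1),
    fun x => (x.2.2.1, x.2.2.2, x.2.1, x.1),
    fun ⟨i, l, a, b⟩ => rfl, fun ⟨i, l, a, b⟩ => rfl⟩ _ _ (fun ⟨i, l, a, b⟩ => rfl)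

/-- relabel to `f b l i a` -/
lemma sum4_cyc (f : Fin n → Fin n → Fin n → Fin n → ℝ) :
    (∑ i, ∑ l, ∑ a, ∑ b, f i l a b) = ∑ i, ∑ l, ∑ a, ∑ b, f b l i a := by
  refine (sum4_eq f).trans (Eq.trans ?_ (sum4_eq (fun i l a b => f b l i a)).symm)
  exact Fintype.sum_equiv ⟨fun x => (x.2.2.1, x.2.1, x.2.2.2, x.1),
    fun x => (x.2.2.2, x.2.1, x.1, x.2.2.1),
    fun ⟨i, l, a, b⟩ => rfl, fun ⟨i, l, a, b⟩ => rfl⟩ _ _ (fun ⟨i, l, a, b⟩ => rfl)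

/-- The trivector (Jacobiator) form determined by `P = π p` and `A l a b = ∂ₗ π_{ab}`. -/
noncomputable def Tf (P : Fin n → Fin n → ℝ) (A : Fin n → Fin n → Fin n → ℝ)
    (α β γ : Fin n → ℝ) : ℝ :=
  ∑ i, ∑ l, ∑ a, ∑ b,
    P i l * A l a b * (α i * β a * γ b + β i * γ a * α b + γ i * α a * β b)

variable {P : Fin n → Fin n → ℝ} {A : Fin n → Fin n → Fin n → ℝ}

lemma Tf_cyc (α β γ : Fin n → ℝ) : Tf P A α β γ = Tf P A β γ α := by
  unfold Tf
  refine Finset.sum_congr rfl fun i _ => Finset.sum_congr rfl fun l _ =>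
    Finset.sum_congr rfl fun a _ => Finset.sum_congr rfl fun b _ => by ring

lemma Tf_swap23 (hA : ∀ l a b, A l a b = -A l b a) (α β γ : Fin n → ℝ) :
    Tf P A α γ β = -Tf P A α β γ := by
  unfold Tf
  rw [sum4_swapAB]
  rw [show -(∑ i, ∑ l, ∑ a, ∑ b : Fin n,
      P i l * A l a b * (α i * β a * γ b + β i * γ a * α b + γ i * α a * β b))
    = ∑ i, ∑ l, ∑ a, ∑ b : Fin n,
      -(P i l * A l a b * (α i * β a * γ b + β i * γ a * α b + γ i * α a * β b)) by
    simp]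
  refine Finset.sum_congr rfl fun i _ => Finset.sum_congr rfl fun l _ =>
    Finset.sum_congr rfl fun a _ => Finset.sum_congr rfl fun b _ => ?_
  rw [hA l b a]
  ring

lemma Tf_add1 (x y β γ : Fin n → ℝ) :
    Tf P A (x + y) β γ = Tf P A x β γ + Tf P A y β γ := by
  unfold Tf
  rw [← Finset.sum_add_distrib]
  refine Finset.sum_congr rfl fun i _ => ?_
  rw [← Finset.sum_add_distrib]
  refine Finset.sum_congr rfl fun l _ => ?_
  rw [← Finset.sum_add_distrib]
  refine Finset.sum_congr rfl fun a _ => ?_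
  rw [← Finset.sum_add_distrib]
  refine Finset.sum_congr rfl fun b _ => ?_
  simp only [Pi.add_apply]
  ring

lemma Tf_smul1 (s : ℝ) (x β γ : Fin n → ℝ) :
    Tf P A (s • x) β γ = s * Tf P A x β γ := by
  unfold Tf
  simp only [Finset.mul_sum]
  refine Finset.sum_congr rfl fun i _ => Finset.sum_congr rfl fun l _ =>
    Finset.sum_congr rfl fun a _ => Finset.sum_congr rfl fun b _ => ?_
  simp only [Pi.smul_apply, smul_eq_mul]
  ring

lemma Tf_alt1 (hA : ∀ l a b, A l a b = -A l b a) (x γ : Fin n → ℝ) :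
    Tf P A x x γ = 0 := by
  have h1 : Tf P A x x γ = Tf P A x γ x := Tf_cyc x x γ
  have h2 : Tf P A x γ x = -Tf P A x x γ := Tf_swap23 hA x x γ
  linarith

/-- cancellation of the second-derivative terms -/
lemma cancel_pair (hP : ∀ i j, P i j = -P j i) (Q : Fin n → Fin n → ℝ)
    (hQ : ∀ i j, Q i j = Q j i) (u v : Fin n → ℝ) :
    (∑ i, ∑ l, ∑ a, ∑ b, P i l * u i * (P a b * (v a * Q l b)))
      + (∑ i, ∑ l, ∑ a, ∑ b, P i l * v i * (P a b * (Q l a * u b))) = 0 := by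
  have h2 : (∑ i, ∑ l, ∑ a, ∑ b, P i l * v i * (P a b * (Q l a * u b)))
      = ∑ i, ∑ l, ∑ a, ∑ b, -(P i l * u i * (P a b * (v a * Q l b))) := by
    rw [sum4_pair (fun i l a b => P i l * v i * (P a b * (Q l a * u b)))]
    refine Finset.sum_congr rfl fun i _ => Finset.sum_congr rfl fun l _ =>
      Finset.sum_congr rfl fun a _ => Finset.sum_congr rfl fun b _ => ?_
    rw [hP l i, hQ b l]
    ring
  rw [h2]
  simp [← Finset.sum_add_distrib]

end Alg

section Expand
variable {n : ℕ} {π : (Fin n → ℝ) → Matrix (Fin n) (Fin n) ℝ}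
  {g h k : (Fin n → ℝ) → ℝ}

lemma diffAt_of_top {f : (Fin n → ℝ) → ℝ} (hf : ContDiff ℝ (⊤ : ℕ∞) f) (p : Fin n → ℝ) :
    DifferentiableAt ℝ f p := (hf.differentiable (by simp)).differentiableAt

lemma bracket_smooth (hsmooth : ∀ i j, ContDiff ℝ (⊤ : ℕ∞) (fun p => π p i j))
    (hg : ContDiff ℝ (⊤ : ℕ∞) g) (hh : ContDiff ℝ (⊤ : ℕ∞) h) :
    ContDiff ℝ (⊤ : ℕ∞) (bracket π g h) := by
  unfold bracket
  refine ContDiff.sum fun i _ => ContDiff.sum fun j _ => ?_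
  exact ((hsmooth i j).mul (pd_smooth hg i)).mul (pd_smooth hh j)

lemma pd_bracket (hsmooth : ∀ i j, ContDiff ℝ (⊤ : ℕ∞) (fun p => π p i j))
    (hh : ContDiff ℝ (⊤ : ℕ∞) h) (hk : ContDiff ℝ (⊤ : ℕ∞) k) (l : Fin n) (p : Fin n → ℝ) :
    pd l (bracket π h k) p = ∑ a, ∑ b,
      (pd l (fun q => π q a b) p * pd a h p * pd b k p
       + π p a b * pd l (pd a h) p * pd b k p
       + π p a b * pd a h p * pd l (pd b k) p) := by
  have hπd : ∀ a b, DifferentiableAt ℝ (fun q => π q a b) p := fun a b =>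
    diffAt_of_top (hsmooth a b) p
  have hterm : ∀ a b, DifferentiableAt ℝ (fun q => π q a b * pd a h q * pd b k q) p :=
    fun a b => ((hπd a b).mul (diffAt_of_top (pd_smooth hh a) p)).mul
      (diffAt_of_top (pd_smooth hk b) p)
  have h1 : pd l (bracket π h k) p
      = pd l (fun q => ∑ a, ∑ b, π q a b * pd a h q * pd b k q) p := rfl
  rw [h1, pd_sum Finset.univ _ l p (fun a _ => DifferentiableAt.fun_sum fun b _ => hterm a b)]
  refine Finset.sum_congr rfl fun a _ => ?_
  rw [pd_sum Finset.univ _ l p (fun b _ => hterm a b)]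
  refine Finset.sum_congr rfl fun b _ => ?_
  exact pd_mul3 _ _ _ l p (hπd a b) (diffAt_of_top (pd_smooth hh a) p)
    (diffAt_of_top (pd_smooth hk b) p)

lemma bracket_bracket_expand (hsmooth : ∀ i j, ContDiff ℝ (⊤ : ℕ∞) (fun p => π p i j))
    (hg : ContDiff ℝ (⊤ : ℕ∞) g) (hh : ContDiff ℝ (⊤ : ℕ∞) h) (hk : ContDiff ℝ (⊤ : ℕ∞) k) (p : Fin n → ℝ) :
    bracket π g (bracket π h k) p
      = (∑ i, ∑ l, ∑ a, ∑ b, π p i l * pd l (fun q => π q a b) p *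
          (pd i g p * pd a h p * pd b k p))
      + (∑ i, ∑ l, ∑ a, ∑ b, π p i l * pd i g p * (π p a b * (pd l (pd a h) p * pd b k p)))
      + (∑ i, ∑ l, ∑ a, ∑ b, π p i l * pd i g p * (π p a b * (pd a h p * pd l (pd b k) p))) := by
  have h1 : bracket π g (bracket π h k) p
      = ∑ i, ∑ l, π p i l * pd i g p * pd l (bracket π h k) p := rfl
  rw [h1]
  have h2 : ∀ i l : Fin n, π p i l * pd i g p * pd l (bracket π h k) p
      = (∑ a, ∑ b, π p i l * pd l (fun q => π q a b) p * (pd i g p * pd a h p * pd b k p))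
      + (∑ a, ∑ b, π p i l * pd i g p * (π p a b * (pd l (pd a h) p * pd b k p)))
      + (∑ a, ∑ b, π p i l * pd i g p * (π p a b * (pd a h p * pd l (pd b k) p))) := by
    intro i l
    rw [pd_bracket hsmooth hh hk l p]
    rw [Finset.mul_sum, ← Finset.sum_add_distrib, ← Finset.sum_add_distrib]
    refine Finset.sum_congr rfl fun a _ => ?_
    rw [Finset.mul_sum, ← Finset.sum_add_distrib, ← Finset.sum_add_distrib]
    refine Finset.sum_congr rfl fun b _ => ?_
    ring
  calc (∑ i, ∑ l, π p i l * pd i g p * pd l (bracket π h k) p)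
      = ∑ i, ∑ l,
        ((∑ a, ∑ b, π p i l * pd l (fun q => π q a b) p * (pd i g p * pd a h p * pd b k p))
        + (∑ a, ∑ b, π p i l * pd i g p * (π p a b * (pd l (pd a h) p * pd b k p)))
        + (∑ a, ∑ b, π p i l * pd i g p * (π p a b * (pd a h p * pd l (pd b k) p)))) := by
        exact Finset.sum_congr rfl fun i _ => Finset.sum_congr rfl fun l _ => h2 i l
    _ = _ := by
        simp only [Finset.sum_add_distrib]
end Expand

section Ker
variable {n : ℕ} {π : (Fin n → ℝ) → Matrix (Fin n) (Fin n) ℝ}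

/-- relabel to `f b a l i` (full reversal) -/
lemma sum4_rev (f : Fin n → Fin n → Fin n → Fin n → ℝ) :
    (∑ i, ∑ l, ∑ a, ∑ b, f i l a b) = ∑ i, ∑ l, ∑ a, ∑ b, f b a l i := by
  refine (sum4_eq f).trans (Eq.trans ?_ (sum4_eq (fun i l a b => f b a l i)).symm)
  exact Fintype.sum_equiv ⟨fun x => (x.2.2.2, x.2.2.1, x.2.1, x.1),
    fun x => (x.2.2.2, x.2.2.1, x.2.1, x.1),
    fun ⟨i, l, a, b⟩ => rfl, fun ⟨i, l, a, b⟩ => rfl⟩ _ _ (fun ⟨i, l, a, b⟩ => rfl)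

lemma X_smooth (hsmooth : ∀ i j, ContDiff ℝ (⊤ : ℕ∞) (fun p => π p i j)) (α : Fin n → ℝ) :
    ContDiff ℝ (⊤ : ℕ∞) (fun q => (π q).mulVec α) := by
  refine contDiff_pi.mpr fun b => ?_
  have h1 : (fun q => (π q).mulVec α b) = fun q => ∑ a, π q b a * α a := rfl
  rw [h1]
  exact ContDiff.sum fun a _ => (hsmooth b a).mul contDiff_const

lemma fderiv_X_apply (hsmooth : ∀ i j, ContDiff ℝ (⊤ : ℕ∞) (fun p => π p i j)) (α : Fin n → ℝ)
    (p w : Fin n → ℝ) (b : Fin n) :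
    (fderiv ℝ (fun q => (π q).mulVec α) p w) b
      = ∑ a, α a * (∑ l, w l * pd l (fun q => π q b a) p) := by
  have hπd : ∀ a b, DifferentiableAt ℝ (fun q => π q a b) p := fun a b =>
    (((hsmooth a b).differentiable (by simp))).differentiableAt
  have hdiff : ∀ b : Fin n, DifferentiableAt ℝ (fun q => (π q).mulVec α b) p := by
    intro b
    have h1 : (fun q => (π q).mulVec α b) = fun q => ∑ a, π q b a * α a := rfl
    rw [h1]
    exact DifferentiableAt.fun_sum fun a _ => (hπd b a).mul_const (α a)
  have h0 : fderiv ℝ (fun q => (π q).mulVec α) p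
      = ContinuousLinearMap.pi (fun b => fderiv ℝ (fun q => (π q).mulVec α b) p) :=
    fderiv_pi hdiff
  rw [h0, ContinuousLinearMap.pi_apply]
  have h1 : (fun q => (π q).mulVec α b) = fun q => ∑ a, π q b a * α a := rfl
  rw [h1, fderiv_fun_sum (fun a _ => (hπd b a).mul_const (α a)),
    ContinuousLinearMap.sum_apply]
  refine Finset.sum_congr rfl fun a _ => ?_
  rw [fderiv_mul_const (hπd b a) (α a)]
  rw [ContinuousLinearMap.smul_apply, smul_eq_mul,
    pd_apply p (hπd b a) w]

lemma dot_ker (hanti : ∀ p, (π p).transpose = -π p) (p : Fin n → ℝ) {γ : Fin n → ℝ}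
    (hγ : (π p).mulVec γ = 0) (v : Fin n → ℝ) :
    (∑ b, γ b * (π p).mulVec v b) = 0 := by
  have hP : ∀ i j, π p i j = -π p j i := by
    intro i j
    have := congrFun (congrFun (hanti p) j) i
    simpa [Matrix.transpose_apply] using this
  have h1 : ∀ b, (π p).mulVec v b = ∑ j, π p b j * v j := fun b => rfl
  have h2 : ∀ j, (π p).mulVec γ j = 0 := fun j => congrFun hγ j
  calc (∑ b, γ b * (π p).mulVec v b) = ∑ b, ∑ j, γ b * (π p b j * v j) := by
        refine Finset.sum_congr rfl fun b _ => ?_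
        rw [h1, Finset.mul_sum]
    _ = ∑ j, ∑ b, γ b * (π p b j * v j) := Finset.sum_comm
    _ = ∑ j, (-v j) * ((π p).mulVec γ j) := by
        refine Finset.sum_congr rfl fun j _ => ?_
        rw [show (π p).mulVec γ j = ∑ b, π p j b * γ b from rfl, Finset.mul_sum]
        refine Finset.sum_congr rfl fun b _ => ?_
        rw [hP j b]; ring
    _ = 0 := by simp [h2]

/-- relabel to `f b a i l` -/
lemma sum4_pinv (f : Fin n → Fin n → Fin n → Fin n → ℝ) :
    (∑ i, ∑ l, ∑ a, ∑ b, f i l a b) = ∑ i, ∑ l, ∑ a, ∑ b, f b a i l := by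
  refine (sum4_eq f).trans (Eq.trans ?_ (sum4_eq (fun i l a b => f b a i l)).symm)
  exact Fintype.sum_equiv ⟨fun x => (x.2.2.1, x.2.2.2, x.2.1, x.1),
    fun x => (x.2.2.2, x.2.2.1, x.1, x.2.1),
    fun ⟨i, l, a, b⟩ => rfl, fun ⟨i, l, a, b⟩ => rfl⟩ _ _ (fun ⟨i, l, a, b⟩ => rfl)

lemma pd_neg (f : (Fin n → ℝ) → ℝ) (l : Fin n) (p : Fin n → ℝ) :
    pd l (fun q => -f q) p = -pd l f p := by
  unfold pd
  rw [fderiv_fun_neg]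
  simp

/-- The main identity: the Jacobiator trivector paired with `γ` equals `γ` paired with
the bracket of two Hamiltonian fields plus a vector in the image of `π p`. -/
lemma Tf_eq_vect (hsmooth : ∀ i j, ContDiff ℝ (⊤ : ℕ∞) (fun p => π p i j))
    (hanti : ∀ p, (π p).transpose = -π p) (p : Fin n → ℝ) (α β γ : Fin n → ℝ) :
    Tf (π p) (fun l a b => pd l (fun q => π q a b) p) α β γ
      = (∑ b, γ b * lieB (fun q => (π q).mulVec α) (fun q => (π q).mulVec β) p b)
        + (∑ b, γ b * (π p).mulVec
            (fun l => ∑ i, ∑ a, pd l (fun q => π q i a) p * α i * β a) b) := by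
  have hP : ∀ i j, π p i j = -π p j i := by
    intro i j
    have := congrFun (congrFun (hanti p) j) i
    simpa [Matrix.transpose_apply] using this
  set A : Fin n → Fin n → Fin n → ℝ := fun l a b => pd l (fun q => π q a b) p with hA
  have hAanti : ∀ l a b, A l a b = -A l b a := by
    intro l a b
    have h : (fun q => π q a b) = fun q => -π q b a := by
      funext q
      have := congrFun (congrFun (hanti q) a) b
      simp only [Matrix.transpose_apply, Matrix.neg_apply] at this
      linarith [this]
    calc A l a b = pd l (fun q => -π q b a) p := by rw [hA]; simp only; rw [h]
      _ = -A l b a := pd_neg _ l p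
  set m : Fin n → ℝ := fun l => ∑ i, ∑ a, pd l (fun q => π q i a) p * α i * β a with hm
  -- the three pieces of Tf
  have hTf : Tf (π p) A α β γ
      = (∑ i, ∑ l, ∑ a, ∑ b, π p i l * A l a b * (α i * β a * γ b))
      + (∑ i, ∑ l, ∑ a, ∑ b, π p i l * A l a b * (β i * γ a * α b))
      + (∑ i, ∑ l, ∑ a, ∑ b, π p i l * A l a b * (γ i * α a * β b)) := by
    unfold Tf
    simp only [mul_add, Finset.sum_add_distrib]
  have hXp : ∀ l, (π p).mulVec α l = ∑ i, π p l i * α i := fun l => rfl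
  have hYp : ∀ l, (π p).mulVec β l = ∑ i, π p l i * β i := fun l => rfl
  have hlie : ∀ b, lieB (fun q => (π q).mulVec α) (fun q => (π q).mulVec β) p b
      = (∑ a, β a * (∑ l, (π p).mulVec α l * A l b a))
        - (∑ a, α a * (∑ l, (π p).mulVec β l * A l b a)) := by
    intro b
    show (fderiv ℝ (fun q => (π q).mulVec β) p ((π p).mulVec α)
        - fderiv ℝ (fun q => (π q).mulVec α) p ((π p).mulVec β)) b = _
    rw [Pi.sub_apply, fderiv_X_apply hsmooth β p _ b, fderiv_X_apply hsmooth α p _ b]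
  -- piece 1
  have R1 : (∑ i, ∑ l, ∑ a, ∑ b, π p i l * A l a b * (α i * β a * γ b))
      = ∑ b, γ b * (∑ a, β a * (∑ l, (π p).mulVec α l * A l b a)) := by
    rw [sum4_rev (fun i l a b => π p i l * A l a b * (α i * β a * γ b))]
    refine Finset.sum_congr rfl fun b _ => ?_
    simp only [hXp, Finset.mul_sum, Finset.sum_mul]
    refine Finset.sum_congr rfl fun a _ => Finset.sum_congr rfl fun l _ =>
      Finset.sum_congr rfl fun i _ => ?_
    rw [hP l i, hAanti l b a]
    ring
  -- piece 2
  have R2 : (∑ i, ∑ l, ∑ a, ∑ b, π p i l * A l a b * (β i * γ a * α b))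
      = -(∑ b, γ b * (∑ a, α a * (∑ l, (π p).mulVec β l * A l b a))) := by
    rw [sum4_pinv (fun i l a b => π p i l * A l a b * (β i * γ a * α b))]
    rw [show -(∑ b, γ b * (∑ a, α a * (∑ l, (π p).mulVec β l * A l b a)))
        = ∑ b, -(γ b * (∑ a, α a * (∑ l, (π p).mulVec β l * A l b a))) by
      rw [← Finset.sum_neg_distrib]]
    refine Finset.sum_congr rfl fun b _ => ?_
    simp only [hYp, Finset.mul_sum, Finset.sum_mul, neg_mul, Finset.sum_neg_distrib,
      mul_neg, ← Finset.sum_neg_distrib]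
    refine Finset.sum_congr rfl fun a _ => Finset.sum_congr rfl fun l _ =>
      Finset.sum_congr rfl fun i _ => ?_
    rw [hP l i]
    ring
  -- piece 3
  have R3 : (∑ i, ∑ l, ∑ a, ∑ b, π p i l * A l a b * (γ i * α a * β b))
      = ∑ b, γ b * (π p).mulVec m b := by
    refine Finset.sum_congr rfl fun b _ => ?_
    rw [show (π p).mulVec m b = ∑ l, π p b l * m l from rfl, hm]
    simp only [Finset.mul_sum]
    refine Finset.sum_congr rfl fun l _ => Finset.sum_congr rfl fun i _ =>
      Finset.sum_congr rfl fun a _ => ?_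
    ring
  rw [hTf, R1, R2, R3]
  have hsplit : ∀ b : Fin n, γ b * lieB (fun q => (π q).mulVec α) (fun q => (π q).mulVec β) p b
      = γ b * (∑ a, β a * (∑ l, (π p).mulVec α l * A l b a))
        - γ b * (∑ a, α a * (∑ l, (π p).mulVec β l * A l b a)) := by
    intro b
    rw [hlie b]
    ring
  rw [show (∑ b, γ b * lieB (fun q => (π q).mulVec α) (fun q => (π q).mulVec β) p b)
      = (∑ b, γ b * (∑ a, β a * (∑ l, (π p).mulVec α l * A l b a)))
        - (∑ b, γ b * (∑ a, α a * (∑ l, (π p).mulVec β l * A l b a))) by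
    rw [← Finset.sum_sub_distrib]
    exact Finset.sum_congr rfl fun b _ => hsplit b]
  ring

/-- If `γ` kills the image of `π p`, the Jacobiator trivector vanishes against it. -/
lemma Tf_ker (hsmooth : ∀ i j, ContDiff ℝ (⊤ : ℕ∞) (fun p => π p i j))
    (hanti : ∀ p, (π p).transpose = -π p)
    (hint : ∀ X Y : (Fin n → ℝ) → Fin n → ℝ, ContDiff ℝ (⊤ : ℕ∞) X → ContDiff ℝ (⊤ : ℕ∞) Y →
      (∀ p, X p ∈ Set.range (π p).mulVec) → (∀ p, Y p ∈ Set.range (π p).mulVec) →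
      ∀ p, lieB X Y p ∈ Set.range (π p).mulVec)
    (p : Fin n → ℝ) {γ : Fin n → ℝ} (hγ : (π p).mulVec γ = 0) (α β : Fin n → ℝ) :
    Tf (π p) (fun l a b => pd l (fun q => π q a b) p) α β γ = 0 := by
  rw [Tf_eq_vect hsmooth hanti p α β γ]
  obtain ⟨c, hc⟩ := hint (fun q => (π q).mulVec α) (fun q => (π q).mulVec β)
    (X_smooth hsmooth α) (X_smooth hsmooth β)
    (fun q => ⟨α, rfl⟩) (fun q => ⟨β, rfl⟩) p
  have h1 : (∑ b, γ b * lieB (fun q => (π q).mulVec α) (fun q => (π q).mulVec β) p b) = 0 := by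
    rw [show lieB (fun q => (π q).mulVec α) (fun q => (π q).mulVec β) p
      = (π p).mulVec c from hc.symm]
    exact dot_ker hanti p hγ c
  have h2 := dot_ker hanti p hγ
    (fun l => ∑ i, ∑ a, pd l (fun q => π q i a) p * α i * β a)
  rw [h1, h2, add_zero]
end Ker

section Vanish
variable {n : ℕ}

lemma Tf_vanish {P : Fin n → Fin n → ℝ} {A : Fin n → Fin n → Fin n → ℝ}
    (hA : ∀ l a b, A l a b = -A l b a)
    (C : (Fin n → ℝ) → Prop) (u v : Fin n → ℝ)
    (hker : ∀ {γ}, C γ → ∀ α β, Tf P A α β γ = 0)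
    (hd : ∀ x, ∃ s t : ℝ, C (x - s • u - t • v))
    (α β γ : Fin n → ℝ) : Tf P A α β γ = 0 := by
  have cyc := fun α β γ => Tf_cyc (P := P) (A := A) α β γ
  have swap := fun α β γ => Tf_swap23 (P := P) hA α β γ
  have alt12 : ∀ x γ', Tf P A x x γ' = 0 := by
    intro x γ'
    have h1 : Tf P A x x γ' = Tf P A x γ' x := cyc x x γ'
    have h2 : Tf P A x γ' x = -Tf P A x x γ' := swap x x γ'
    linarith
  have alt23 : ∀ α' x, Tf P A α' x x = 0 := by
    intro α' x
    have h2 : Tf P A α' x x = -Tf P A α' x x := swap α' x x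
    linarith
  have alt13 : ∀ x β', Tf P A x β' x = 0 := by
    intro x β'
    rw [cyc]
    exact alt23 β' x
  have ker1 : ∀ {y}, C y → ∀ β' γ', Tf P A y β' γ' = 0 := by
    intro y hy β' γ'
    rw [cyc]
    exact hker hy _ _
  have red1 : ∀ x β' γ', ∃ s t : ℝ,
      Tf P A x β' γ' = s * Tf P A u β' γ' + t * Tf P A v β' γ' := by
    intro x β' γ'
    obtain ⟨s, t, hC⟩ := hd x
    refine ⟨s, t, ?_⟩
    have hx : x = s • u + t • v + (x - s • u - t • v) := by abel
    calc Tf P A x β' γ' = Tf P A (s • u + t • v + (x - s • u - t • v)) β' γ' := by rw [← hx]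
      _ = Tf P A (s • u + t • v) β' γ' + Tf P A (x - s • u - t • v) β' γ' :=
          Tf_add1 _ _ _ _
      _ = Tf P A (s • u) β' γ' + Tf P A (t • v) β' γ' + 0 := by
          rw [Tf_add1 _ _ _ _, ker1 hC]
      _ = s * Tf P A u β' γ' + t * Tf P A v β' γ' := by
          rw [Tf_smul1, Tf_smul1]; ring
  have red2 : ∀ x α' γ', ∃ s t : ℝ,
      Tf P A α' x γ' = s * Tf P A α' u γ' + t * Tf P A α' v γ' := by
    intro x α' γ'
    obtain ⟨s, t, e⟩ := red1 x γ' α'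
    refine ⟨s, t, ?_⟩
    rw [cyc α' x γ', e, ← cyc α' u γ', ← cyc α' v γ']
  have red3 : ∀ x α' β', ∃ s t : ℝ,
      Tf P A α' β' x = s * Tf P A α' β' u + t * Tf P A α' β' v := by
    intro x α' β'
    obtain ⟨s, t, e⟩ := red1 x α' β'
    refine ⟨s, t, ?_⟩
    rw [cyc α' β' x, cyc β' x α', e, cyc u α' β', cyc α' β' u, cyc v α' β', cyc α' β' v]
  obtain ⟨s1, t1, e1⟩ := red1 α β γ
  obtain ⟨s2, t2, e2⟩ := red2 β u γ
  obtain ⟨s2', t2', e2'⟩ := red2 β v γ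
  obtain ⟨s3, t3, e3⟩ := red3 γ u v
  obtain ⟨s3', t3', e3'⟩ := red3 γ v u
  rw [e1, e2, e2', e3, e3', alt12 u γ, alt12 v γ, alt13 u v, alt23 u v, alt13 v u, alt23 v u]
  ring

lemma exists_pair {n : ℕ} (M : Matrix (Fin n) (Fin n) ℝ) (hrank : M.rank ≤ 2) :
    ∃ u v : Fin n → ℝ, ∀ x : Fin n → ℝ, ∃ s t : ℝ,
      M.mulVec (x - s • u - t • v) = 0 := by
  set f := M.mulVecLin with hf
  set K := LinearMap.ker f with hK
  have hQ2 : Module.finrank ℝ ((Fin n → ℝ) ⧸ K) ≤ 2 := by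
    rw [f.quotKerEquivRange.finrank_eq]
    exact hrank
  set r := Module.finrank ℝ ((Fin n → ℝ) ⧸ K) with hr
  let b : Module.Basis (Fin r) ℝ ((Fin n → ℝ) ⧸ K) := Module.finBasis ℝ _
  let w : Fin 2 → ((Fin n → ℝ) ⧸ K) := fun i => if h : (i : ℕ) < r then b ⟨i, h⟩ else 0
  have hspan : ∀ q : ((Fin n → ℝ) ⧸ K), q ∈ Submodule.span ℝ {w 0, w 1} := by
    have htop : (⊤ : Submodule ℝ ((Fin n → ℝ) ⧸ K)) ≤ Submodule.span ℝ {w 0, w 1} := by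
      rw [← b.span_eq]
      refine Submodule.span_le.mpr ?_
      rintro _ ⟨j, rfl⟩
      have hj2 : (j : ℕ) < 2 := lt_of_lt_of_le j.isLt hQ2
      have hbw : b j = w ⟨(j : ℕ), hj2⟩ := by
        simp only [w]
        rw [dif_pos j.isLt]
      rw [hbw]
      apply Submodule.subset_span
      rcases j with ⟨jv, hjv⟩
      interval_cases jv
      · left; rfl
      · right; rfl
    intro q; exact htop trivial
  obtain ⟨u, hu⟩ := Submodule.Quotient.mk_surjective K (w 0)
  obtain ⟨v, hv⟩ := Submodule.Quotient.mk_surjective K (w 1)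
  refine ⟨u, v, fun x => ?_⟩
  obtain ⟨s, t, hst⟩ := Submodule.mem_span_pair.mp (hspan (Submodule.Quotient.mk x))
  refine ⟨s, t, ?_⟩
  have hmem : x - s • u - t • v ∈ K := by
    rw [← Submodule.Quotient.mk_eq_zero]
    have : Submodule.Quotient.mk (p := K) (x - s • u - t • v)
        = Submodule.Quotient.mk (p := K) x - s • Submodule.Quotient.mk (p := K) u
          - t • Submodule.Quotient.mk (p := K) v := by
      simp [Submodule.Quotient.mk_sub, Submodule.Quotient.mk_smul]
    rw [this, hu, hv, ← hst]
    abel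
  have := (LinearMap.mem_ker).mp hmem
  rwa [hf, Matrix.mulVecLin_apply] at this

end Vanish

section Jac
variable {n : ℕ} {π : (Fin n → ℝ) → Matrix (Fin n) (Fin n) ℝ} {g h k : (Fin n → ℝ) → ℝ}

lemma jacobi_eq_Tf (hsmooth : ∀ i j, ContDiff ℝ (⊤ : ℕ∞) (fun p => π p i j))
    (hanti : ∀ p, (π p).transpose = -π p)
    (hg : ContDiff ℝ (⊤ : ℕ∞) g) (hh : ContDiff ℝ (⊤ : ℕ∞) h) (hk : ContDiff ℝ (⊤ : ℕ∞) k) (p : Fin n → ℝ) :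
    bracket π g (bracket π h k) p + bracket π h (bracket π k g) p
        + bracket π k (bracket π g h) p
      = Tf (π p) (fun l a b => pd l (fun q => π q a b) p)
          (fun i => pd i g p) (fun i => pd i h p) (fun i => pd i k p) := by
  have hP : ∀ i j, π p i j = -π p j i := by
    intro i j
    have := congrFun (congrFun (hanti p) j) i
    simpa [Matrix.transpose_apply] using this
  have hTf : Tf (π p) (fun l a b => pd l (fun q => π q a b) p)
      (fun i => pd i g p) (fun i => pd i h p) (fun i => pd i k p)
      = (∑ i, ∑ l, ∑ a, ∑ b, π p i l * pd l (fun q => π q a b) p *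
          (pd i g p * pd a h p * pd b k p))
      + (∑ i, ∑ l, ∑ a, ∑ b, π p i l * pd l (fun q => π q a b) p *
          (pd i h p * pd a k p * pd b g p))
      + (∑ i, ∑ l, ∑ a, ∑ b, π p i l * pd l (fun q => π q a b) p *
          (pd i k p * pd a g p * pd b h p)) := by
    unfold Tf
    simp only [mul_add, Finset.sum_add_distrib]
  have c1 : (∑ i, ∑ l, ∑ a, ∑ b, π p i l * pd i g p *
        (π p a b * (pd a h p * pd l (pd b k) p)))
      + (∑ i, ∑ l, ∑ a, ∑ b, π p i l * pd i h p *
        (π p a b * (pd l (pd a k) p * pd b g p))) = 0 :=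
    cancel_pair hP (fun l b => pd l (pd b k) p)
      (fun i j => pd_pd_symm hk i j p) (fun i => pd i g p) (fun i => pd i h p)
  have c2 : (∑ i, ∑ l, ∑ a, ∑ b, π p i l * pd i h p *
        (π p a b * (pd a k p * pd l (pd b g) p)))
      + (∑ i, ∑ l, ∑ a, ∑ b, π p i l * pd i k p *
        (π p a b * (pd l (pd a g) p * pd b h p))) = 0 :=
    cancel_pair hP (fun l b => pd l (pd b g) p)
      (fun i j => pd_pd_symm hg i j p) (fun i => pd i h p) (fun i => pd i k p)
  have c3 : (∑ i, ∑ l, ∑ a, ∑ b, π p i l * pd i k p *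
        (π p a b * (pd a g p * pd l (pd b h) p)))
      + (∑ i, ∑ l, ∑ a, ∑ b, π p i l * pd i g p *
        (π p a b * (pd l (pd a h) p * pd b k p))) = 0 :=
    cancel_pair hP (fun l b => pd l (pd b h) p)
      (fun i j => pd_pd_symm hh i j p) (fun i => pd i k p) (fun i => pd i g p)
  rw [bracket_bracket_expand hsmooth hg hh hk p,
      bracket_bracket_expand hsmooth hh hk hg p,
      bracket_bracket_expand hsmooth hk hg hh p, hTf]
  linarith [c1, c2, c3]
end Jac

/-- A smooth bivector field whose characteristic distribution
(the pointwise image of `α ↦ π(·,α)`) is integrable (rendered as: closed under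
Lie brackets of smooth vector fields with values in it) and has rank at most 2 at each
point satisfies the Jacobi identity, i.e. is Poisson. -/
theorem bivector_rank_le_two_integrable_is_poisson {n : ℕ}
    (π : (Fin n → ℝ) → Matrix (Fin n) (Fin n) ℝ)
    (hsmooth : ∀ i j, ContDiff ℝ (⊤ : ℕ∞) (fun p => π p i j))
    (hanti : ∀ p, (π p).transpose = -π p)
    (hrank : ∀ p, (π p).rank ≤ 2)
    (hint : ∀ X Y : (Fin n → ℝ) → Fin n → ℝ, ContDiff ℝ (⊤ : ℕ∞) X → ContDiff ℝ (⊤ : ℕ∞) Y →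
      (∀ p, X p ∈ Set.range (π p).mulVec) → (∀ p, Y p ∈ Set.range (π p).mulVec) →
      ∀ p, lieB X Y p ∈ Set.range (π p).mulVec) :
    ∀ g h k : (Fin n → ℝ) → ℝ, ContDiff ℝ (⊤ : ℕ∞) g → ContDiff ℝ (⊤ : ℕ∞) h → ContDiff ℝ (⊤ : ℕ∞) k →
    ∀ p : Fin n → ℝ,
      bracket π g (bracket π h k) p + bracket π h (bracket π k g) p
        + bracket π k (bracket π g h) p = 0 := by
  intro g h k hg hh hk p
  rw [jacobi_eq_Tf hsmooth hanti hg hh hk p]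
  have hAanti : ∀ l a b : Fin n, pd l (fun q => π q a b) p
      = -(pd l (fun q => π q b a) p) := by
    intro l a b
    have hfun : (fun q => π q a b) = fun q => -π q b a := by
      funext q
      have := congrFun (congrFun (hanti q) a) b
      simp only [Matrix.transpose_apply, Matrix.neg_apply] at this
      linarith [this]
    rw [hfun]
    exact pd_neg _ l p
  obtain ⟨u, v, hd⟩ := exists_pair (π p) (hrank p)
  exact Tf_vanish (P := π p) (A := fun l a b => pd l (fun q => π q a b) p)
    (fun l a b => hAanti l a b) (fun γ => (π p).mulVec γ = 0) u v
    (fun {γ} hγ α β => Tf_ker hsmooth hanti hint p hγ α β) hd _ _ _
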